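/- arXiv:0707.3627 — 2 statements merged into one kernel-verified Lean document; each statement's English description precedes it below -/
import Mathlib

section
/- If P is a prime two-sided ideal of R = k_q[[x_1,…,x_n]], then P ∩ k_q[x] is a prime two-sided ideal of the polynomial subalgebra k_q[x]. -/
/-!
Common setup: `q`-commutative power series ring `R = k_q[[x_1,…,x_n]]` and
`q`-commutative Laurent series ring `L = k_q[[x_1^{±1},…,x_n^{±1}]]`, characterized
by their coefficient descriptions (twisted convolution multiplication).
-/

noncomputable section

/-- A multiplicatively antisymmetric `n × n` matrix over `k`:
`q_{ii} = 1` and `q_{ij} q_{ji} = 1`. -/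
structure QMatrix (k : Type*) [Field k] (n : ℕ) where
  q : Fin n → Fin n → k
  diag : ∀ i, q i i = 1
  antisym : ∀ i j, q i j * q j i = 1

namespace QMatrix

variable {k : Type*} [Field k] {n : ℕ} (Q : QMatrix k n)

lemma q_ne_zero (i j : Fin n) : Q.q i j ≠ 0 := fun h0 => by
  have h1 := Q.antisym i j
  rw [h0, zero_mul] at h1
  exact zero_ne_one h1

/-- The twisting weight `∏_{1 ≤ j < i ≤ n} q_{ij}^{u_i v_j}` (natural exponents), so that
`x^u · x^v = weight u v · x^{u+v}` in `R`. -/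
def weight (u v : Fin n →₀ ℕ) : k :=
  ∏ i : Fin n, ∏ j : Fin n, if j < i then Q.q i j ^ (u i * v j) else 1

/-- The twisting weight `∏_{1 ≤ j < i ≤ n} q_{ij}^{u_i v_j}` (integer exponents), so that
`x^u · x^v = zweight u v · x^{u+v}` in `L`. -/
def zweight (u v : Fin n → ℤ) : k :=
  ∏ i : Fin n, ∏ j : Fin n, if j < i then Q.q i j ^ (u i * v j) else 1

/-- The alternating bicharacter `σ(s,t) = ∏_{i,j} q_{ij}^{s_i t_j}`, so that
`x^s x^t = σ(s,t) x^t x^s` in `L`. -/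
def sigma (s t : Fin n → ℤ) : k :=
  ∏ i : Fin n, ∏ j : Fin n, Q.q i j ^ (s i * t j)

end QMatrix

/-- `R` is (a model of) the `q`-commutative power series ring `k_q[[x_1, …, x_n]]`:
its underlying `k`-vector space is that of all families of coefficients indexed by `ℕ^n`,
the constant series `1` is the multiplicative unit, and multiplication is given by the
twisted convolution: the coefficient of `x^s` in `f·g` is
`∑_{u+v=s} f_u g_v ∏_{1≤j<i≤n} q_{ij}^{u_i v_j}`. -/
structure IsQPowerSeriesRing {k : Type*} [Field k] {n : ℕ} (Q : QMatrix k n)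
    (R : Type*) [Ring R] [Algebra k R] where
  coeff : R ≃ₗ[k] ((Fin n →₀ ℕ) → k)
  coeff_one : ∀ s, coeff 1 s = if s = 0 then 1 else 0
  coeff_mul : ∀ f g : R, ∀ s, coeff (f * g) s =
    ∑ uv ∈ Finset.HasAntidiagonal.antidiagonal s, coeff f uv.1 * coeff g uv.2 * Q.weight uv.1 uv.2

namespace IsQPowerSeriesRing

variable {k : Type*} [Field k] {n : ℕ} {Q : QMatrix k n}
variable {R : Type*} [Ring R] [Algebra k R] (h : IsQPowerSeriesRing Q R)

/-- The monic monomial `x^s` of `R`. -/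
def mono (s : Fin n →₀ ℕ) : R :=
  h.coeff.symm (fun t => if t = s then 1 else 0)

/-- The variable `x_i` of `R`. -/
def X (i : Fin n) : R := h.mono (Finsupp.single i 1)

/-- The augmentation ideal `J = ⟨x_1, …, x_n⟩` of `R`, as a two-sided ideal. -/
def Jideal : TwoSidedIdeal R := TwoSidedIdeal.span (Set.range h.X)

/-- For `w ⊆ {1,…,n}`, the two-sided ideal `J_w = ⟨x_i : i ∈ w⟩` of `R`. -/
def Jw (w : Finset (Fin n)) : TwoSidedIdeal R :=
  TwoSidedIdeal.span {r : R | ∃ i ∈ w, r = h.X i}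

/-- The action of `θ ∈ H = (kˣ)^n` on `R`, determined by
`x^s ↦ θ_1^{s_1} ⋯ θ_n^{s_n} x^s` and applied coefficientwise to series. -/
def hAct (θ : Fin n → kˣ) (f : R) : R :=
  h.coeff.symm (fun s => (∏ i, (θ i : k) ^ (s i)) * h.coeff f s)

/-- A two-sided ideal of `R` is `H`-stable if it is mapped to itself by every element
of the torus `H = (kˣ)^n`. -/
def IsHStable (I : TwoSidedIdeal R) : Prop :=
  ∀ θ : Fin n → kˣ, h.hAct θ '' (I : Set R) = (I : Set R)

end IsQPowerSeriesRing

/-- A coefficient family `c : ℤ^n → k` is Laurent-bounded if `c s = 0` whenever some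
coordinate of `s` is sufficiently negative, i.e. `∃ N, min(s_1,…,s_n) < -N → c s = 0`. -/
def LaurentBounded {k : Type*} [Field k] {n : ℕ} (c : (Fin n → ℤ) → k) : Prop :=
  ∃ N : ℕ, ∀ s : Fin n → ℤ, (∃ i, s i < -(N : ℤ)) → c s = 0

/-- `L` is (a model of) the `q`-commutative Laurent series ring
`k_q[[x_1^{±1}, …, x_n^{±1}]]`: its elements correspond, `k`-linearly, to the
Laurent-bounded coefficient families indexed by `ℤ^n`, the constant series `1` is the
multiplicative unit, and multiplication is given by the twisted convolution. -/
structure IsQLaurentSeriesRing {k : Type*} [Field k] {n : ℕ} (Q : QMatrix k n)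
    (L : Type*) [Ring L] [Algebra k L] where
  coeff : L →ₗ[k] ((Fin n → ℤ) → k)
  coeff_injective : Function.Injective coeff
  coeff_bounded : ∀ f, LaurentBounded (coeff f)
  coeff_surjective : ∀ c, LaurentBounded c → ∃ f, coeff f = c
  coeff_one : ∀ s, coeff 1 s = if s = 0 then 1 else 0
  mul_support_finite : ∀ f g : L, ∀ s : Fin n → ℤ,
    (Function.support fun u => coeff f u * coeff g (s - u) * Q.zweight u (s - u)).Finite
  coeff_mul : ∀ f g : L, ∀ s : Fin n → ℤ, coeff (f * g) s =
    ∑ᶠ u : Fin n → ℤ, coeff f u * coeff g (s - u) * Q.zweight u (s - u)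

namespace IsQLaurentSeriesRing

variable {k : Type*} [Field k] {n : ℕ} {Q : QMatrix k n}
variable {L : Type*} [Ring L] [Algebra k L] (h : IsQLaurentSeriesRing Q L)

/-- The action of `θ ∈ H = (kˣ)^n` on `L`, determined by
`x^s ↦ θ_1^{s_1} ⋯ θ_n^{s_n} x^s` and applied coefficientwise to series. -/
def hAct (θ : Fin n → kˣ) (f : L) : L :=
  Classical.choose (h.coeff_surjective
    (fun s => (∏ i, ((θ i ^ (s i) : kˣ) : k)) * h.coeff f s)
    (by
      obtain ⟨N, hN⟩ := h.coeff_bounded f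
      exact ⟨N, fun s hs => by simp only []; rw [hN s hs, mul_zero]⟩))

/-- A two-sided ideal of `L` is `H`-stable if it is mapped to itself by every element
of the torus `H = (kˣ)^n`. -/
def IsHStable (I : TwoSidedIdeal L) : Prop :=
  ∀ θ : Fin n → kˣ, h.hAct θ '' (I : Set L) = (I : Set L)

end IsQLaurentSeriesRing

/-- A two-sided ideal `P` of a (possibly noncommutative) ring `A` is prime if `P ≠ A`
and whenever `I, J` are two-sided ideals with `IJ ⊆ P`, then `I ⊆ P` or `J ⊆ P`. -/
def IsPrimeTwoSided {A : Type*} [Ring A] (P : TwoSidedIdeal A) : Prop :=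
  P ≠ ⊤ ∧ ∀ I J : TwoSidedIdeal A, (∀ a ∈ I, ∀ b ∈ J, a * b ∈ P) → I ≤ P ∨ J ≤ P

open Classical in
/-- The polynomial subalgebra `k_q[x_1,…,x_n]` of `R`: series with finite support. -/
def IsQPowerSeriesRing.polySubalgebra {k : Type*} [Field k] {n : ℕ} {Q : QMatrix k n}
    {R : Type*} [Ring R] [Algebra k R] (h : IsQPowerSeriesRing Q R) : Subalgebra k R where
  carrier := {f : R | (Function.support (h.coeff f)).Finite}
  add_mem' := by
    intro a b ha hb
    refine Set.Finite.subset (ha.union hb) ?_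
    intro s hs
    simp only [Set.mem_setOf_eq, Function.mem_support, map_add, Pi.add_apply] at hs ha hb ⊢
    by_contra hc
    simp only [Set.mem_union, Function.mem_support, not_or, not_not] at hc
    rw [hc.1, hc.2, add_zero] at hs
    exact hs rfl
  mul_mem' := by
    intro a b ha hb
    refine Set.Finite.subset (Set.Finite.add ha hb) ?_
    intro s hs
    simp only [Set.mem_setOf_eq, Function.mem_support] at hs
    rw [h.coeff_mul a b s] at hs
    obtain ⟨uv, huv, hne⟩ := Finset.exists_ne_zero_of_sum_ne_zero hs
    have h1 : h.coeff a uv.1 ≠ 0 := fun h0 => hne (by rw [h0, zero_mul, zero_mul])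
    have h2 : h.coeff b uv.2 ≠ 0 := fun h0 => hne (by rw [h0, mul_zero, zero_mul])
    exact Set.mem_add.mpr ⟨uv.1, h1, uv.2, h2, Finset.HasAntidiagonal.mem_antidiagonal.mp huv⟩
  algebraMap_mem' := by
    intro c
    refine Set.Finite.subset (Set.finite_singleton 0) ?_
    intro s hs
    simp only [Function.mem_support] at hs
    rw [Algebra.algebraMap_eq_smul_one, map_smul, Pi.smul_apply, h.coeff_one s] at hs
    simp only [Set.mem_singleton_iff]
    by_contra hc
    rw [if_neg hc] at hs
    simp at hs

/-!
Let `a, b` be polynomials with `a x^s b ∈ P` for every monomial `x^s`. It suffices to show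
`a f b ∈ P` for every series `f`, since primeness of `P` then gives `a ∈ P` or `b ∈ P`.
The terms of `f` divisible by a variable lying in `P` form a series in `P`. Every other
monomial `x^s` is a normal element outside `P`, so `a x^s b = (a σ_s(b)) x^s ∈ P` forces
`a σ_s(b) ∈ P`, where `σ_s` rescales coefficients. All `a σ_s(b)` lie in the
finite-dimensional space `a · span {x^t : t ∈ supp b}`, hence in the span of finitely many
`c ∈ P`, and then `a f b = ∑ c g_c` for suitable series `g_c`.
-/

open Finset

namespace IsPrimeTwoSided

variable {A : Type*} [Ring A] {P : TwoSidedIdeal A}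

theorem mem_or_mem_of_forall_mul_mul_mem (hP : IsPrimeTwoSided P) {a b : A}
    (hab : ∀ f, a * f * b ∈ P) : a ∈ P ∨ b ∈ P := by
  let I : TwoSidedIdeal A := .mk' {u | ∀ f, u * f * b ∈ P}
    (fun f => by simp)
    (fun hu hv f => by simpa only [add_mul] using P.add_mem (hu f) (hv f))
    (fun hu f => by simpa only [neg_mul] using P.neg_mem (hu f))
    (fun {x y} hy f => by simpa only [mul_assoc] using P.mul_mem_left x _ (hy f))
    (fun {x y} hx f => by simpa only [mul_assoc] using hx (y * f))
  let J : TwoSidedIdeal A := .mk' {v | ∀ u, (∀ f, u * f * b ∈ P) → u * v ∈ P}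
    (fun u _ => by simp)
    (fun hv hw u hu => by simpa only [mul_add] using P.add_mem (hv u hu) (hw u hu))
    (fun hv u hu => by simpa only [mul_neg] using P.neg_mem (hv u hu))
    (fun {x y} hy u hu => by
      simpa only [mul_assoc] using hy (u * x) fun f => by simpa only [mul_assoc] using hu (x * f))
    (fun {x y} hx u hu => by simpa only [mul_assoc] using P.mul_mem_right _ y (hx u hu))
  have hIJ : ∀ u ∈ I, ∀ v ∈ J, u * v ∈ P := fun u hu v hv =>
    (TwoSidedIdeal.mem_mk' _ _ _ _ _ _ v).mp hv u ((TwoSidedIdeal.mem_mk' _ _ _ _ _ _ u).mp hu)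
  refine (hP.2 I J hIJ).imp (fun hI => hI ((TwoSidedIdeal.mem_mk' _ _ _ _ _ _ a).mpr hab))
    (fun hJ => hJ ((TwoSidedIdeal.mem_mk' _ _ _ _ _ _ b).mpr fun u hu => by simpa using hu 1))

theorem mem_or_mem_of_mul_mem (hP : IsPrimeTwoSided P) {a b : A} (hab : a * b ∈ P)
    (hb : ∀ f, ∃ g, f * b = b * g) : a ∈ P ∨ b ∈ P :=
  hP.mem_or_mem_of_forall_mul_mul_mem fun f => by
    obtain ⟨g, hg⟩ := hb f
    rw [mul_assoc, hg, ← mul_assoc]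
    exact P.mul_mem_right _ _ hab

end IsPrimeTwoSided

namespace QMatrix

variable {k : Type*} [Field k] {n : ℕ} (Q : QMatrix k n)

lemma weight_ne_zero (u v : Fin n →₀ ℕ) : Q.weight u v ≠ 0 :=
  prod_ne_zero_iff.mpr fun i _ => prod_ne_zero_iff.mpr fun j _ => by
    split_ifs
    · exact pow_ne_zero _ (Q.q_ne_zero i j)
    · exact one_ne_zero

/-- `x^s x^t = commFactor s t • x^t x^s` in `R`. -/
def commFactor (s t : Fin n →₀ ℕ) : k := Q.weight s t / Q.weight t s

end QMatrix

namespace IsQPowerSeriesRing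

variable {k : Type*} [Field k] {n : ℕ} {Q : QMatrix k n}
variable {R : Type*} [Ring R] [Algebra k R] (h : IsQPowerSeriesRing Q R)

lemma coeff_mono (s t : Fin n →₀ ℕ) : h.coeff (h.mono s) t = if t = s then 1 else 0 := by
  simp [mono]

lemma coeff_mul_mono (g : R) (p s : Fin n →₀ ℕ) :
    h.coeff (g * h.mono p) s =
      if p ≤ s then h.coeff g (s - p) * Q.weight (s - p) p else 0 := by
  simp only [h.coeff_mul, h.coeff_mono, mul_ite, ite_mul, mul_one, mul_zero, zero_mul]
  rw [← sum_filter, HasAntidiagonal.filter_snd_eq_antidiagonal s p]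
  split_ifs <;> simp

lemma coeff_mono_mul (g : R) (p s : Fin n →₀ ℕ) :
    h.coeff (h.mono p * g) s =
      if p ≤ s then Q.weight p (s - p) * h.coeff g (s - p) else 0 := by
  simp only [h.coeff_mul, h.coeff_mono, ite_mul, one_mul, zero_mul]
  rw [← sum_filter, HasAntidiagonal.filter_fst_eq_antidiagonal s p]
  split_ifs <;> simp [mul_comm]

lemma mono_zero : h.mono 0 = 1 :=
  h.coeff.injective <| funext fun t => by rw [coeff_mono, coeff_one]

lemma mono_mem_polySubalgebra (s : Fin n →₀ ℕ) : h.mono s ∈ h.polySubalgebra :=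
  (Set.finite_singleton s).subset fun t ht => Set.mem_singleton_iff.mpr <| by
    by_contra hts
    exact ht (by rw [coeff_mono, if_neg hts])

lemma mono_mul_mono (s t : Fin n →₀ ℕ) :
    h.mono s * h.mono t = Q.weight s t • h.mono (s + t) := by
  refine h.coeff.injective <| funext fun w => ?_
  rw [coeff_mul_mono, map_smul, Pi.smul_apply, coeff_mono, coeff_mono, smul_eq_mul]
  by_cases hw : w = s + t
  · simp [hw]
  · rw [if_neg hw, mul_zero]
    split_ifs with ht hs
    · exact absurd (by rw [← hs, tsub_add_cancel_of_le ht]) hw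
    · rw [zero_mul]
    · rfl

def scale (μ : (Fin n →₀ ℕ) → k) : R →ₗ[k] R where
  toFun f := h.coeff.symm (μ * h.coeff f)
  map_add' f g := by rw [map_add, mul_add, map_add]
  map_smul' c f := by rw [map_smul, mul_smul_comm, map_smul, RingHom.id_apply]

@[simp]
lemma coeff_scale (μ : (Fin n →₀ ℕ) → k) (f : R) (s : Fin n →₀ ℕ) :
    h.coeff (h.scale μ f) s = μ s * h.coeff f s := by
  simp [scale]

lemma scale_mono (μ : (Fin n →₀ ℕ) → k) (s : Fin n →₀ ℕ) :
    h.scale μ (h.mono s) = μ s • h.mono s :=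
  h.coeff.injective <| funext fun t => by
    by_cases ht : t = s <;> simp [coeff_mono, ht]

lemma mono_mul (s : Fin n →₀ ℕ) (f : R) :
    h.mono s * f = h.scale (Q.commFactor s) f * h.mono s := by
  refine h.coeff.injective <| funext fun w => ?_
  rw [coeff_mono_mul, coeff_mul_mono, coeff_scale, QMatrix.commFactor]
  split_ifs
  · field_simp [Q.weight_ne_zero]
  · rfl

lemma mul_mono (s : Fin n →₀ ℕ) (f : R) :
    f * h.mono s = h.mono s * h.scale (fun t => (Q.commFactor s t)⁻¹) f := by
  refine h.coeff.injective <| funext fun w => ?_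
  rw [coeff_mono_mul, coeff_mul_mono, coeff_scale, QMatrix.commFactor]
  split_ifs
  · field_simp [Q.weight_ne_zero]
  · rfl

lemma exists_mul_mono_eq (s : Fin n →₀ ℕ) (f : R) : ∃ g, f * h.mono s = h.mono s * g :=
  ⟨_, h.mul_mono s f⟩

lemma coeff_sum_smul_mono (T : Finset (Fin n →₀ ℕ)) (c : (Fin n →₀ ℕ) → k)
    (s : Fin n →₀ ℕ) : h.coeff (∑ t ∈ T, c t • h.mono t) s = if s ∈ T then c s else 0 := by
  simp [coeff_mono]

lemma eq_sum_mono_of_support_subset {f : R} {T : Finset (Fin n →₀ ℕ)}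
    (hf : Function.support (h.coeff f) ⊆ T) : f = ∑ t ∈ T, h.coeff f t • h.mono t := by
  refine h.coeff.injective <| funext fun s => ?_
  rw [coeff_sum_smul_mono]
  split_ifs with hs
  · rfl
  · exact Function.notMem_support.mp fun hs' => hs (hf hs')

def vanishBelow (w : Fin n →₀ ℕ) : TwoSidedIdeal R :=
  .mk' {f | ∀ s ≤ w, h.coeff f s = 0}
    (fun s _ => by simp)
    (fun hf hg s hs => by simp [hf s hs, hg s hs])
    (fun hf s hs => by simp [hf s hs])
    (fun {x y} hy s hs => by
      rw [h.coeff_mul]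
      refine sum_eq_zero fun uv huv => ?_
      rw [hy uv.2 ((le_add_self.trans_eq (HasAntidiagonal.mem_antidiagonal.mp huv)).trans hs),
        mul_zero, zero_mul])
    (fun {x y} hx s hs => by
      rw [h.coeff_mul]
      refine sum_eq_zero fun uv huv => ?_
      rw [hx uv.1 ((le_self_add.trans_eq (HasAntidiagonal.mem_antidiagonal.mp huv)).trans hs),
        zero_mul, zero_mul])

lemma mem_vanishBelow {w : Fin n →₀ ℕ} {f : R} :
    f ∈ h.vanishBelow w ↔ ∀ s ≤ w, h.coeff f s = 0 :=
  TwoSidedIdeal.mem_mk' _ _ _ _ _ _ f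

lemma sub_sum_Iic_mem_vanishBelow (f : R) (w : Fin n →₀ ℕ) :
    f - ∑ s ∈ Iic w, h.coeff f s • h.mono s ∈ h.vanishBelow w :=
  h.mem_vanishBelow.mpr fun s hs => by
    rw [map_sub, Pi.sub_apply, coeff_sum_smul_mono, if_pos (mem_Iic.mpr hs), sub_self]

lemma scale_mem_vanishBelow (μ : (Fin n →₀ ℕ) → k) {w : Fin n →₀ ℕ} {f : R}
    (hf : f ∈ h.vanishBelow w) : h.scale μ f ∈ h.vanishBelow w :=
  h.mem_vanishBelow.mpr fun s hs => by rw [coeff_scale, h.mem_vanishBelow.mp hf s hs, mul_zero]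

lemma exists_coeff_sub_mul_X (g : R) (i : Fin n) :
    ∃ q : R, ∀ s, h.coeff (g - q * h.X i) s = if s i = 0 then h.coeff g s else 0 := by
  refine ⟨h.coeff.symm fun t => h.coeff g (t + .single i 1) / Q.weight t (.single i 1),
    fun s => ?_⟩
  rw [map_sub, Pi.sub_apply, X, coeff_mul_mono, LinearEquiv.apply_symm_apply]
  by_cases hs : s i = 0
  · rw [if_pos hs, if_neg (by simpa [Finsupp.single_le_iff] using hs), sub_zero]
  · have hle : Finsupp.single i 1 ≤ s := Finsupp.single_le_iff.mpr (Nat.one_le_iff_ne_zero.mpr hs)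
    rw [if_neg hs, if_pos hle, tsub_add_cancel_of_le hle, div_mul_cancel₀ _ (Q.weight_ne_zero _ _),
      sub_self]

lemma mem_Jw_of_coeff_eq_zero (w : Finset (Fin n)) {g : R}
    (hg : ∀ s, (∀ i ∈ w, s i = 0) → h.coeff g s = 0) : g ∈ h.Jw w := by
  classical
  induction w using Finset.induction_on generalizing g with
  | empty =>
    rw [show g = 0 from h.coeff.injective <| funext fun s => by simpa using hg s]
    exact zero_mem _
  | @insert i w _ ih =>
    obtain ⟨q, hq⟩ := h.exists_coeff_sub_mul_X g i
    have hrest : g - q * h.X i ∈ h.Jw (insert i w) := by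
      refine TwoSidedIdeal.span_mono ?_ (ih fun s hs => ?_)
      · rintro _ ⟨j, hj, rfl⟩
        exact ⟨j, mem_insert_of_mem hj, rfl⟩
      · rw [hq]
        split_ifs with hsi
        · exact hg s (forall_mem_insert _ _ _ |>.mpr ⟨hsi, hs⟩)
        · rfl
    have hXi : h.X i ∈ h.Jw (insert i w) := TwoSidedIdeal.subset_span ⟨i, mem_insert_self i w, rfl⟩
    simpa using add_mem hrest (TwoSidedIdeal.mul_mem_left _ q _ hXi)

lemma exists_X_mem_of_mono_mem {P : TwoSidedIdeal R} (hP : IsPrimeTwoSided P)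
    {u : Fin n →₀ ℕ} (hu : h.mono u ∈ P) : ∃ i, u i ≠ 0 ∧ h.X i ∈ P := by
  induction u using WellFoundedLT.induction with
  | _ u ih =>
  obtain ⟨i, hi⟩ : ∃ i, u i ≠ 0 := by
    by_contra! hu0
    rw [show u = 0 from Finsupp.ext hu0, mono_zero] at hu
    exact hP.1 (P.eq_top hu)
  set u' := u - Finsupp.single i 1
  have hu' : Finsupp.single i 1 + u' = u :=
    add_tsub_cancel_of_le (Finsupp.single_le_iff.mpr (Nat.one_le_iff_ne_zero.mpr hi))
  have hXu' : h.X i * h.mono u' ∈ P := by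
    rw [X, mono_mul_mono, hu', Algebra.smul_def]
    exact P.mul_mem_left _ _ hu
  rcases hP.mem_or_mem_of_mul_mem hXu' (h.exists_mul_mono_eq u') with hX | hmono
  · exact ⟨i, hi, hX⟩
  · have hlt : u' < u :=
      hu' ▸ lt_add_of_pos_left u' (pos_iff_ne_zero.mpr (Finsupp.single_ne_zero.mpr one_ne_zero))
    obtain ⟨j, hj, hXj⟩ := ih u' hlt hmono
    exact ⟨j, fun hu0 => hj (by simp [u', hu0]), hXj⟩

/-- Two series agree if their difference lies in every `vanishBelow w`, and modulo
`vanishBelow w` both sides only see the finitely many monomials `x^s`, `s ≤ w`, of `f`. -/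
theorem mul_mul_eq_sum_mul_scale {a b f : R} {A : Finset R} {μ : R → (Fin n →₀ ℕ) → k}
    (hμ : ∀ s, h.coeff f s ≠ 0 → a * h.mono s * b = ∑ c ∈ A, μ c s • (c * h.mono s)) :
    a * f * b = ∑ c ∈ A, c * h.scale (μ c) f := by
  rw [← sub_eq_zero]
  refine h.coeff.injective <| funext fun w => ?_
  refine (h.mem_vanishBelow.mp ?_ w le_rfl).trans (congrFun (map_zero h.coeff) w).symm
  set t := ∑ s ∈ Iic w, h.coeff f s • h.mono s
  have ht : a * t * b = ∑ c ∈ A, c * h.scale (μ c) t := by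
    simp only [t, map_sum, map_smul, scale_mono, mul_sum, sum_mul, mul_smul_comm, smul_mul_assoc,
      smul_smul]
    rw [sum_comm]
    refine sum_congr rfl fun s _ => ?_
    by_cases hs : h.coeff f s = 0
    · simp [hs]
    · simp only [hμ s hs, smul_sum, smul_smul, mul_comm]
  have hft := h.sub_sum_Iic_mem_vanishBelow f w
  have hsplit : a * f * b - ∑ c ∈ A, c * h.scale (μ c) f =
      a * (f - t) * b - ∑ c ∈ A, c * h.scale (μ c) (f - t) := by
    simp only [mul_sub, sub_mul, map_sub, sum_sub_distrib, ht]
    abel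
  rw [hsplit]
  exact sub_mem (TwoSidedIdeal.mul_mem_right _ _ _ (TwoSidedIdeal.mul_mem_left _ _ _ hft))
    (TwoSidedIdeal.finsetSum_mem _ _ _ fun c _ =>
      TwoSidedIdeal.mul_mem_left _ _ _ (h.scale_mem_vanishBelow _ hft))

/-- All `a * scale μ b` lie in the finite-dimensional space `a · span {x^t : t ∈ supp b}`. -/
lemma exists_finset_subset_span_mul_scale (P : TwoSidedIdeal R) (a : R) {b : R}
    (hb : (Function.support (h.coeff b)).Finite) :
    ∃ A : Finset R, (A : Set R) ⊆ P ∧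
      ∀ μ, a * h.scale μ b ∈ P → a * h.scale μ b ∈ Submodule.span k (A : Set R) := by
  set V := Submodule.span k ((fun t => a * h.mono t) '' hb.toFinset)
  have : FiniteDimensional k V :=
    FiniteDimensional.span_of_finite k (hb.toFinset.finite_toSet.image _)
  set W := (TwoSidedIdeal.asIdeal P).restrictScalars k ⊓ V
  obtain ⟨A, hA⟩ := (Submodule.fg_iff_finiteDimensional W).mpr
    (Submodule.finiteDimensional_of_le inf_le_right)
  refine ⟨A, fun c hc => ?_, fun μ hμ => ?_⟩
  · have hcW : c ∈ W := hA ▸ Submodule.subset_span hc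
    exact TwoSidedIdeal.mem_asIdeal.mp hcW.1
  · rw [hA]
    refine ⟨TwoSidedIdeal.mem_asIdeal.mpr hμ, ?_⟩
    have hsupp : Function.support (h.coeff (h.scale μ b)) ⊆ hb.toFinset := fun s hs =>
      hb.mem_toFinset.mpr fun hbs => hs (by rw [coeff_scale, hbs, mul_zero])
    rw [h.eq_sum_mono_of_support_subset hsupp, mul_sum]
    exact Submodule.sum_mem _ fun t ht => by
      rw [mul_smul_comm]
      exact Submodule.smul_mem _ _ (Submodule.subset_span ⟨t, ht, rfl⟩)

lemma mul_scale_commFactor_mem {P : TwoSidedIdeal R} (hP : IsPrimeTwoSided P) {a b : R}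
    (hab : ∀ s, a * h.mono s * b ∈ P) {u : Fin n →₀ ℕ} (hu : ∀ i, h.X i ∈ P → u i = 0) :
    a * h.scale (Q.commFactor u) b ∈ P := by
  have hmul : a * h.scale (Q.commFactor u) b * h.mono u ∈ P := by
    rw [mul_assoc, ← mono_mul, ← mul_assoc]
    exact hab u
  refine (hP.mem_or_mem_of_mul_mem hmul (h.exists_mul_mono_eq u)).resolve_right fun hu' => ?_
  obtain ⟨i, hi, hX⟩ := h.exists_X_mem_of_mono_mem hP hu'
  exact hi (hu i hX)

/-- Split `f` into the part `f₁` on monomials avoiding the variables in `P`, and the rest,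
which lies in the ideal generated by those variables. -/
theorem mul_mul_mem_of_forall_mul_mono_mul_mem {P : TwoSidedIdeal R} (hP : IsPrimeTwoSided P)
    {a b : R} (hb : (Function.support (h.coeff b)).Finite) (hab : ∀ s, a * h.mono s * b ∈ P)
    (f : R) : a * f * b ∈ P := by
  classical
  set Ω : Set (Fin n →₀ ℕ) := {s | ∀ i, h.X i ∈ P → s i = 0}
  set f₁ := h.scale (Ω.indicator 1) f
  have hf₂ : f - f₁ ∈ P := by
    refine TwoSidedIdeal.span_le.mpr ?_ (h.mem_Jw_of_coeff_eq_zero {i | h.X i ∈ P} fun s hs => ?_)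
    · rintro _ ⟨i, hi, rfl⟩
      exact (mem_filter.mp hi).2
    · have hsΩ : s ∈ Ω := fun i hi => hs i (by simpa using hi)
      simp [f₁, hsΩ]
  have hf₁ : a * f₁ * b ∈ P := by
    obtain ⟨A, hAP, hA⟩ := h.exists_finset_subset_span_mul_scale P a hb
    have hν : ∀ s, ∃ ν : R → k, s ∈ Ω → ∑ c ∈ A, ν c • c = a * h.scale (Q.commFactor s) b := by
      intro s
      by_cases hs : s ∈ Ω
      · obtain ⟨ν, -, hν⟩ :=
          Submodule.mem_span_finset.mp (hA _ (h.mul_scale_commFactor_mem hP hab hs))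
        exact ⟨ν, fun _ => hν⟩
      · exact ⟨0, fun hs' => absurd hs' hs⟩
    choose ν hν using hν
    rw [h.mul_mul_eq_sum_mul_scale (μ := fun c s => ν s c) fun s hs => ?_]
    · exact TwoSidedIdeal.finsetSum_mem _ _ _ fun c hc => P.mul_mem_right _ _ (hAP hc)
    · have hsΩ : s ∈ Ω := by
        by_contra hsΩ
        simp [f₁, hsΩ] at hs
      rw [mul_assoc a, mono_mul, ← mul_assoc, ← hν s hsΩ, sum_mul]
      simp only [smul_mul_assoc]
  have hsplit : a * f * b = a * f₁ * b + a * (f - f₁) * b := by noncomm_ring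
  rw [hsplit]
  exact P.add_mem hf₁ (P.mul_mem_right _ _ (P.mul_mem_left _ _ hf₂))

end IsQPowerSeriesRing

theorem stmt_3_general {k : Type*} [Field k] {n : ℕ} (Q : QMatrix k n)
    (R : Type*) [Ring R] [Algebra k R] (h : IsQPowerSeriesRing Q R)
    (P : TwoSidedIdeal R) (hP : IsPrimeTwoSided P) :
    IsPrimeTwoSided (TwoSidedIdeal.comap h.polySubalgebra.val P) := by
  refine ⟨fun htop => hP.1 (P.eq_top ?_), fun I J hIJ => ?_⟩
  · simpa [TwoSidedIdeal.mem_comap] using (TwoSidedIdeal.comap h.polySubalgebra.val P).one_mem htop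
  · by_contra! hIJP
    obtain ⟨⟨a, haI, haP⟩, ⟨b, hbJ, hbP⟩⟩ :=
      And.imp SetLike.not_le_iff_exists.mp SetLike.not_le_iff_exists.mp hIJP
    have hab : ∀ s, (a : R) * h.mono s * b ∈ P := fun s => by
      simpa [TwoSidedIdeal.mem_comap] using
        hIJ _ (I.mul_mem_right _ ⟨_, h.mono_mem_polySubalgebra s⟩ haI) _ hbJ
    rcases hP.mem_or_mem_of_forall_mul_mul_mem
      (h.mul_mul_mem_of_forall_mul_mono_mul_mem hP b.2 hab) with ha | hb
    exacts [haP (by simpa [TwoSidedIdeal.mem_comap] using ha),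
      hbP (by simpa [TwoSidedIdeal.mem_comap] using hb)]

/-- If `P` is a prime two-sided ideal of `R = k_q[[x_1,…,x_n]]`, then
`P ∩ k_q[x]` is a prime two-sided ideal of the polynomial subalgebra `k_q[x]`. -/
theorem stmt_3 {k : Type*} [Field k] {n : ℕ} (hn : 0 < n) (Q : QMatrix k n)
    (R : Type*) [Ring R] [Algebra k R] (h : IsQPowerSeriesRing Q R)
    (P : TwoSidedIdeal R) (hP : IsPrimeTwoSided P) :
    IsPrimeTwoSided (TwoSidedIdeal.comap h.polySubalgebra.val P) :=
  stmt_3_general Q R h P hP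

end
end

section
/- Assume k is infinite. For every prime two-sided ideal P of L, the intersection ⋂_{h∈H} h(P) of the H-orbit of P equals the zero ideal; equivalently, the H-orbit of P is Zariski dense in the prime spectrum of L. -/
/-!
Common setup: `q`-commutative power series ring `R = k_q[[x_1,…,x_n]]` and
`q`-commutative Laurent series ring `L = k_q[[x_1^{±1},…,x_n^{±1}]]`, characterized
by their coefficient descriptions (twisted convolution multiplication).
-/

noncomputable section

/-!
Let `I = ⋂_θ θ(P)`. It is an `H`-stable two-sided ideal, proper since `P` is, so it suffices
to show that `L` has no nonzero proper `H`-stable ideal. Multiplying a nonzero element of `I`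
by a monomial moves it into `k_q[[x]]`. As `k` is infinite, distinct monomials are scaled by
distinct characters of `H`, so finite `k`-combinations of twists isolate any monomial `x^t` of
lowest degree: `I` contains `x^t + (terms of arbitrarily high degree)`. By Dickson's lemma the
set of such `t` is dominated by a finite set `B`, and the elements `f_b = x^b + ⋯` (`b ∈ B`)
behave like a standard basis: dividing `x^{s₀}` (with `s₀` such an exponent) degree by degree,
the lowest exponents of each remainder are again such exponents, because the remainder differs
from `x^{s₀}` by an element of `I`. The quotients converge in the degree filtration of `L`, so
`x^{s₀} = ∑ a_b f_b ∈ I`, and `x^{s₀}` is a unit.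
-/

theorem Set.IsPWO.exists_finset_forall_exists_le {α : Type*} [PartialOrder α] {T : Set α}
    (hT : T.IsPWO) : ∃ B : Finset α, ↑B ⊆ T ∧ ∀ t ∈ T, ∃ b ∈ B, b ≤ t := by
  have hfin : {x | Minimal (· ∈ T) x}.Finite :=
    (setOfPred_minimal_antichain _).finite_of_partiallyWellOrderedOn
      (hT.mono fun _ hx => hx.prop)
  refine ⟨hfin.toFinset, fun x hx => (hfin.mem_toFinset.1 hx).prop, fun t ht => ?_⟩
  obtain ⟨b, hbt, hb⟩ := hT.exists_le_minimal ht
  exact ⟨b, hfin.mem_toFinset.2 hb, hbt⟩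

theorem isPWO_setOf_nonneg {ι : Type*} [Finite ι] : {s : ι → ℤ | 0 ≤ s}.IsPWO := by
  refine ((Set.isPWO_of_wellQuasiOrderedLE Set.univ).image_of_monotone
    (f := fun (a : ι → ℕ) i => (a i : ℤ)) fun a b hab i => Int.ofNat_le.2 (hab i)).mono ?_
  intro s hs
  exact ⟨fun i => (s i).toNat, trivial, funext fun i => Int.toNat_of_nonneg (hs i)⟩

theorem QMatrix.zweight_ne_zero {k : Type*} [Field k] {n : ℕ} (Q : QMatrix k n)
    (u v : Fin n → ℤ) : Q.zweight u v ≠ 0 :=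
  Finset.prod_ne_zero_iff.2 fun i _ => Finset.prod_ne_zero_iff.2 fun j _ => by
    split_ifs
    · exact zpow_ne_zero _ (Q.q_ne_zero i j)
    · exact one_ne_zero

theorem exists_units_zpow_ne_one {k : Type*} [Field k] [Infinite k] {m : ℤ} (hm : m ≠ 0) :
    ∃ u : kˣ, u ^ m ≠ 1 := by
  classical
  have hd : 0 < m.natAbs := Int.natAbs_pos.2 hm
  obtain ⟨x, hx⟩ := Infinite.exists_notMem_finset
    ((Polynomial.nthRoots m.natAbs (1 : k)).toFinset ∪ {0})
  simp only [Finset.mem_union, Multiset.mem_toFinset, Polynomial.mem_nthRoots hd,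
    Finset.mem_singleton, not_or] at hx
  refine ⟨Units.mk0 x hx.2, fun h1 => hx.1 ?_⟩
  simpa using congrArg Units.val (pow_natAbs_eq_one.2 h1)

theorem TwoSidedIdeal.algebra_smul_mem {k A : Type*} [CommSemiring k] [Ring A] [Algebra k A]
    (I : TwoSidedIdeal A) (c : k) {x : A} (hx : x ∈ I) : c • x ∈ I := by
  rw [Algebra.smul_def]
  exact I.mul_mem_left _ _ hx

namespace IsQLaurentSeriesRing

def degree {n : ℕ} : (Fin n → ℤ) →+ ℤ :=
  AddMonoidHom.mk' (fun s => ∑ i, s i) fun _ _ => Finset.sum_add_distrib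

theorem degree_apply {n : ℕ} (s : Fin n → ℤ) : degree s = ∑ i, s i := rfl

theorem degree_nonneg {n : ℕ} {s : Fin n → ℤ} (hs : 0 ≤ s) : 0 ≤ degree s :=
  (degree_apply s).symm ▸ Finset.sum_nonneg fun i _ => hs i

theorem le_degree_of_nonneg {n : ℕ} {s : Fin n → ℤ} (hs : 0 ≤ s) (i : Fin n) :
    s i ≤ degree s :=
  Finset.single_le_sum (f := fun i => s i) (fun j _ => hs j) (Finset.mem_univ i)

def degreeSlice {n : ℕ} (d : ℤ) : Finset (Fin n → ℤ) :=
  (Finset.Icc 0 fun _ => d).filter fun s => degree s = d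

theorem mem_degreeSlice {n : ℕ} {d : ℤ} {s : Fin n → ℤ} :
    s ∈ degreeSlice d ↔ 0 ≤ s ∧ degree s = d := by
  simp only [degreeSlice, Finset.mem_filter, Finset.mem_Icc]
  exact ⟨fun ⟨⟨h0, _⟩, hd⟩ => ⟨h0, hd⟩,
    fun ⟨h0, hd⟩ => ⟨⟨h0, fun i => hd ▸ le_degree_of_nonneg h0 i⟩, hd⟩⟩

theorem laurentBounded_of_nonneg {k : Type*} [Field k] {n : ℕ} {c : (Fin n → ℤ) → k}
    (hc : ∀ s, c s ≠ 0 → 0 ≤ s) : LaurentBounded c :=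
  ⟨0, fun s ⟨i, hi⟩ => by_contra fun hs => by have := hc s hs i; simp_all; omega⟩

variable {k : Type*} [Field k] {n : ℕ} {Q : QMatrix k n}
variable {L : Type*} [Ring L] [Algebra k L] (h : IsQLaurentSeriesRing Q L)

theorem coeff_ext {f g : L} (hfg : ∀ s, h.coeff f s = h.coeff g s) : f = g :=
  h.coeff_injective (funext hfg)

def ofCoeff (c : (Fin n → ℤ) → k) (hc : LaurentBounded c) : L :=
  Classical.choose (h.coeff_surjective c hc)

@[simp]
theorem coeff_ofCoeff (c : (Fin n → ℤ) → k) (hc : LaurentBounded c) :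
    h.coeff (h.ofCoeff c hc) = c :=
  Classical.choose_spec (h.coeff_surjective c hc)

theorem laurentBounded_single (s : Fin n → ℤ) : LaurentBounded (Pi.single s (1 : k)) := by
  refine ⟨∑ i, (s i).natAbs, fun t ⟨i, hi⟩ => Pi.single_eq_of_ne ?_ _⟩
  rintro rfl
  have : (t i).natAbs ≤ ∑ j, (t j).natAbs :=
    Finset.single_le_sum (f := fun j => (t j).natAbs) (fun _ _ => Nat.zero_le _)
      (Finset.mem_univ i)
  omega

def monomial (s : Fin n → ℤ) : L := h.ofCoeff (Pi.single s 1) (laurentBounded_single s)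

theorem coeff_monomial (s t : Fin n → ℤ) :
    h.coeff (h.monomial s) t = if t = s then 1 else 0 := by
  simp [monomial, Pi.single_apply]

theorem monomial_zero : h.monomial (0 : Fin n → ℤ) = 1 :=
  h.coeff_ext fun t => by rw [coeff_monomial, h.coeff_one]

theorem coeff_monomial_mul (u : Fin n → ℤ) (f : L) (t : Fin n → ℤ) :
    h.coeff (h.monomial u * f) t = Q.zweight u (t - u) * h.coeff f (t - u) := by
  rw [h.coeff_mul, finsum_eq_single _ u fun v hv => by simp [coeff_monomial, hv]]
  simp [coeff_monomial, mul_comm]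

theorem monomial_mul_monomial (s t : Fin n → ℤ) :
    h.monomial s * h.monomial t = Q.zweight s t • h.monomial (s + t) := by
  refine h.coeff_ext fun v => ?_
  rw [coeff_monomial_mul, map_smul, Pi.smul_apply, smul_eq_mul, coeff_monomial, coeff_monomial]
  by_cases hv : v = s + t
  · subst hv; simp
  · rw [if_neg (fun h' => hv (by rw [← h']; abel)), if_neg hv, mul_zero, mul_zero]

theorem monomial_sub_mul (s b : Fin n → ℤ) (g : L) :
    h.monomial (s - b) * g =
      Q.zweight (s - b) b • h.monomial s + h.monomial (s - b) * (g - h.monomial b) := by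
  rw [mul_sub, monomial_mul_monomial, sub_add_cancel, add_sub_cancel]

theorem exists_coeff_ne_zero {f : L} (hf : f ≠ 0) : ∃ s, h.coeff f s ≠ 0 := by
  by_contra! H
  exact hf (h.coeff_ext fun s => by simp [H])

def character (θ : Fin n → kˣ) (s : Fin n → ℤ) : kˣ := ∏ i, θ i ^ s i

theorem character_add (θ : Fin n → kˣ) (s t : Fin n → ℤ) :
    character θ (s + t) = character θ s * character θ t := by
  simp [character, zpow_add, Finset.prod_mul_distrib]

theorem character_mul (θ θ' : Fin n → kˣ) (s : Fin n → ℤ) :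
    character (θ * θ') s = character θ s * character θ' s := by
  simp [character, mul_zpow, Finset.prod_mul_distrib]

theorem character_one_left (s : Fin n → ℤ) : character (1 : Fin n → kˣ) s = 1 := by
  simp [character]

theorem character_zero_right (θ : Fin n → kˣ) : character θ 0 = 1 := by
  simp [character]

theorem coeff_hAct (θ : Fin n → kˣ) (f : L) (s : Fin n → ℤ) :
    h.coeff (h.hAct θ f) s = character θ s * h.coeff f s := by
  rw [character, Units.coe_prod]
  unfold hAct
  generalize_proofs hb
  exact congrFun (Classical.choose_spec hb) s

theorem hAct_one (f : L) : h.hAct 1 f = f :=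
  h.coeff_ext fun s => by simp [coeff_hAct, character_one_left]

theorem hAct_hAct (θ θ' : Fin n → kˣ) (f : L) :
    h.hAct θ (h.hAct θ' f) = h.hAct (θ * θ') f :=
  h.coeff_ext fun s => by simp only [coeff_hAct, character_mul, Units.val_mul]; ring

theorem mem_image_hAct_iff {θ : Fin n → kˣ} {S : Set L} {f : L} :
    f ∈ h.hAct θ '' S ↔ h.hAct θ⁻¹ f ∈ S := by
  constructor
  · rintro ⟨p, hp, rfl⟩
    rwa [hAct_hAct, inv_mul_cancel, hAct_one]
  · exact fun hf => ⟨_, hf, by rw [hAct_hAct, mul_inv_cancel, hAct_one]⟩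

def hActHom (θ : Fin n → kˣ) : L →+* L where
  toFun := h.hAct θ
  map_one' := h.coeff_ext fun s => by
    rw [coeff_hAct, h.coeff_one]
    split_ifs with hs <;> simp [hs, character_zero_right]
  map_mul' f g := h.coeff_ext fun s => by
    simp only [coeff_hAct, h.coeff_mul, mul_finsum]
    refine finsum_congr fun u => ?_
    have hsplit : character θ s = character θ u * character θ (s - u) := by
      rw [← character_add, add_sub_cancel]
    rw [hsplit, Units.val_mul]
    ring
  map_zero' := h.coeff_ext fun s => by simp [coeff_hAct]
  map_add' f g := h.coeff_ext fun s => by simp [coeff_hAct, mul_add]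

theorem exists_character_ne [Infinite k] {s t : Fin n → ℤ} (hst : s ≠ t) :
    ∃ θ : Fin n → kˣ, character θ s ≠ character θ t := by
  classical
  obtain ⟨i, hi⟩ := Function.ne_iff.1 hst
  obtain ⟨u, hu⟩ := exists_units_zpow_ne_one (k := k) (sub_ne_zero.2 hi)
  have hchar : ∀ v : Fin n → ℤ, character (Pi.mulSingle i u) v = u ^ v i := fun v => by
    rw [character, Finset.prod_eq_single i (fun j _ hj => by simp [hj]) (by simp)]
    simp
  refine ⟨Pi.mulSingle i u, fun heq => hu ?_⟩
  rw [hchar, hchar] at heq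
  rw [zpow_sub, heq, mul_inv_cancel]

def filtration (d : ℤ) : Submodule k L where
  carrier := {f | ∀ s, h.coeff f s ≠ 0 → 0 ≤ s ∧ d ≤ degree s}
  zero_mem' := by simp
  add_mem' {f g} hf hg s hs := by
    rw [map_add, Pi.add_apply] at hs
    by_cases hfs : h.coeff f s = 0
    · exact hg s (by simpa [hfs] using hs)
    · exact hf s hfs
  smul_mem' c f hf s hs := by
    rw [map_smul, Pi.smul_apply, smul_eq_mul] at hs
    exact hf s (right_ne_zero_of_mul hs)

variable {h}

theorem filtration_anti {d e : ℤ} (hde : d ≤ e) : h.filtration e ≤ h.filtration d :=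
  fun _ hf s hs => ⟨(hf s hs).1, hde.trans (hf s hs).2⟩

theorem coeff_eq_zero_of_mem_filtration {d : ℤ} {f : L} (hf : f ∈ h.filtration d)
    {s : Fin n → ℤ} (hs : degree s < d) : h.coeff f s = 0 :=
  by_contra fun h0 => (hs.trans_le (hf s h0).2).false

theorem coeff_eq_of_sub_mem_filtration {d : ℤ} {f g : L} (hfg : f - g ∈ h.filtration d)
    {s : Fin n → ℤ} (hs : degree s < d) : h.coeff f s = h.coeff g s := by
  simpa [sub_eq_zero] using coeff_eq_zero_of_mem_filtration hfg hs

theorem monomial_mem_filtration {s : Fin n → ℤ} (hs : 0 ≤ s) :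
    h.monomial s ∈ h.filtration (degree s) := fun t ht => by
  rw [coeff_monomial] at ht
  split_ifs at ht with hts
  · subst hts
    exact ⟨hs, le_rfl⟩
  · exact absurd rfl ht

theorem mul_mem_filtration {d e : ℤ} {f g : L} (hf : f ∈ h.filtration d)
    (hg : g ∈ h.filtration e) : f * g ∈ h.filtration (d + e) := fun s hs => by
  rw [h.coeff_mul] at hs
  obtain ⟨u, hu⟩ : ∃ u, h.coeff f u * h.coeff g (s - u) * Q.zweight u (s - u) ≠ 0 := by
    by_contra! H
    simp [H] at hs
  obtain ⟨hu0, hud⟩ := hf u (left_ne_zero_of_mul (left_ne_zero_of_mul hu))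
  obtain ⟨hv0, hvd⟩ := hg (s - u) (right_ne_zero_of_mul (left_ne_zero_of_mul hu))
  have hs_eq : s = u + (s - u) := (add_sub_cancel u s).symm
  rw [hs_eq, map_add]
  exact ⟨add_nonneg hu0 hv0, add_le_add hud hvd⟩

theorem eq_zero_of_forall_mem_filtration {d : ℤ} {f : L}
    (hf : ∀ m : ℕ, f ∈ h.filtration (d + m)) : f = 0 :=
  h.coeff_ext fun s => by
    rw [map_zero, Pi.zero_apply]
    refine coeff_eq_zero_of_mem_filtration (hf (degree s - d + 1).toNat) ?_
    have := Int.self_le_toNat (degree s - d + 1)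
    omega

theorem exists_sub_mem_filtration_of_cauchy (A : ℕ → L) {c : ℤ} (hA0 : A 0 ∈ h.filtration c)
    (hA : ∀ m : ℕ, A (m + 1) - A m ∈ h.filtration (c + m)) :
    ∃ a : L, ∀ m : ℕ, a - A m ∈ h.filtration (c + m) := by
  have hcauchy : ∀ m m' : ℕ, m ≤ m' → A m' - A m ∈ h.filtration (c + m) := by
    intro m m' hmm'
    induction m', hmm' using Nat.le_induction with
    | base => simp
    | succ m' hle ih =>
      rw [← sub_add_sub_cancel]
      exact add_mem (filtration_anti (by omega) (hA m')) ih
  have hAc : ∀ m, A m ∈ h.filtration c := fun m => by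
    simpa using add_mem hA0 (filtration_anti (by omega) (hcauchy 0 m m.zero_le))
  -- the coefficient at `s` has stabilised from step `N s` on
  let N : (Fin n → ℤ) → ℕ := fun s => (degree s - c + 1).toNat
  have hN : ∀ s, degree s < c + N s := fun s => by
    show degree s < c + ((degree s - c + 1).toNat : ℤ)
    have := Int.self_le_toNat (degree s - c + 1)
    omega
  have hbdd : LaurentBounded fun s => h.coeff (A (N s)) s :=
    laurentBounded_of_nonneg fun s hs => (hAc _ s hs).1
  refine ⟨h.ofCoeff _ hbdd, fun m s hs => ?_⟩
  rw [map_sub, coeff_ofCoeff, Pi.sub_apply] at hs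
  refine ⟨?_, le_of_not_gt fun hlt => hs ?_⟩
  · by_cases hNs : h.coeff (A (N s)) s = 0
    · exact (hAc m s (by simpa [hNs] using hs)).1
    · exact (hAc _ s hNs).1
  · rw [sub_eq_zero]
    rcases le_total (N s) m with hle | hle
    · exact (coeff_eq_of_sub_mem_filtration (hcauchy _ _ hle) (hN s)).symm
    · exact coeff_eq_of_sub_mem_filtration (hcauchy _ _ hle) hlt

theorem sub_sum_degreeSlice_mem_filtration {d : ℤ} {r : L} (hr : r ∈ h.filtration d) :
    r - ∑ s ∈ degreeSlice d, h.coeff r s • h.monomial s ∈ h.filtration (d + 1) := by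
  classical
  intro t ht
  simp only [map_sub, map_sum, map_smul, Pi.sub_apply, Finset.sum_apply, Pi.smul_apply,
    coeff_monomial, smul_eq_mul, mul_ite, mul_one, mul_zero, Finset.sum_ite_eq] at ht
  split_ifs at ht with hts
  · exact absurd (sub_self _) ht
  · obtain ⟨ht0, htd⟩ := hr t (by simpa using ht)
    exact ⟨ht0, lt_of_le_of_ne htd fun hd => hts (mem_degreeSlice.2 ⟨ht0, hd.symm⟩)⟩

section

variable {B : Finset (Fin n → ℤ)} {f : (Fin n → ℤ) → L}

/-- One step of division by a family `f b = x^b + (higher degree)`. -/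
theorem exists_reduction
    (hf : ∀ b ∈ B, f b - h.monomial b ∈ h.filtration (degree b + 1))
    {d : ℤ} {r : L} (hr : r ∈ h.filtration d)
    (hdom : ∀ s ∈ degreeSlice d, h.coeff r s ≠ 0 → ∃ b ∈ B, b ≤ s) :
    ∃ C : (Fin n → ℤ) → L, (∀ b, C b ∈ h.filtration (d - degree b)) ∧
      r - ∑ b ∈ B, C b * f b ∈ h.filtration (d + 1) := by
  classical
  set S := (degreeSlice d).filter fun s => h.coeff r s ≠ 0
  choose! β hβB hβle using fun s (hs : s ∈ S) => hdom s (Finset.mem_filter.1 hs).1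
    (Finset.mem_filter.1 hs).2
  have hSd : ∀ s ∈ S, 0 ≤ s ∧ degree s = d := fun s hs =>
    mem_degreeSlice.1 (Finset.mem_filter.1 hs).1
  let c : (Fin n → ℤ) → k := fun s => h.coeff r s * (Q.zweight (s - β s) (β s))⁻¹
  refine ⟨fun b => ∑ s ∈ S with β s = b, c s • h.monomial (s - b), fun b => ?_, ?_⟩
  · refine Submodule.sum_mem _ fun s hs => Submodule.smul_mem _ _ ?_
    obtain ⟨hsS, rfl⟩ := Finset.mem_filter.1 hs
    have := monomial_mem_filtration (h := h) (sub_nonneg.2 (hβle s hsS))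
    rwa [map_sub, (hSd s hsS).2] at this
  have hsum : ∑ b ∈ B, (∑ s ∈ S with β s = b, c s • h.monomial (s - b)) * f b =
      ∑ s ∈ S, c s • (h.monomial (s - β s) * f (β s)) := by
    rw [← Finset.sum_fiberwise_of_maps_to hβB]
    refine Finset.sum_congr rfl fun b _ => ?_
    rw [Finset.sum_mul]
    refine Finset.sum_congr rfl fun s hs => ?_
    rw [(Finset.mem_filter.1 hs).2, smul_mul_assoc]
  have hterm : ∀ s ∈ S, c s • (h.monomial (s - β s) * f (β s)) =
      h.coeff r s • h.monomial s +
        c s • (h.monomial (s - β s) * (f (β s) - h.monomial (β s))) := fun s _ => by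
    rw [monomial_sub_mul, smul_add, smul_smul, mul_assoc,
      inv_mul_cancel₀ (Q.zweight_ne_zero _ _), mul_one]
  have htrunc : ∑ s ∈ S, h.coeff r s • h.monomial s =
      ∑ s ∈ degreeSlice d, h.coeff r s • h.monomial s :=
    Finset.sum_filter_of_ne fun s _ hs h0 => hs (by rw [h0, zero_smul])
  rw [hsum, Finset.sum_congr rfl hterm, Finset.sum_add_distrib, htrunc, ← sub_sub]
  refine sub_mem (sub_sum_degreeSlice_mem_filtration hr)
    (Submodule.sum_mem _ fun s hs => Submodule.smul_mem _ _ ?_)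
  convert mul_mem_filtration (monomial_mem_filtration (h := h) (sub_nonneg.2 (hβle s hs)))
    (hf _ (hβB s hs)) using 2
  rw [map_sub, (hSd s hs).2]
  ring

/-- The corrections have growing order, so the coefficients converge in `L`. -/
theorem exists_eq_sum_mul_of_forall_approx (hfB : ∀ b ∈ B, f b ∈ h.filtration (degree b))
    {x : L} {d : ℤ} (hx : x ∈ h.filtration d)
    (hstep : ∀ (m : ℕ) (A : (Fin n → ℤ) → L),
      x - ∑ b ∈ B, A b * f b ∈ h.filtration (d + m) →
      ∃ C : (Fin n → ℤ) → L, (∀ b, C b ∈ h.filtration (d + m - degree b)) ∧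
        x - ∑ b ∈ B, (A b + C b) * f b ∈ h.filtration (d + m + 1)) :
    ∃ a : (Fin n → ℤ) → L, x = ∑ b ∈ B, a b * f b := by
  choose! C hC hCx using hstep
  let A : ℕ → (Fin n → ℤ) → L := fun m => Nat.rec 0 (fun m A => A + C m A) m
  have hA : ∀ m : ℕ, x - ∑ b ∈ B, A m b * f b ∈ h.filtration (d + m) := by
    intro m
    induction m with
    | zero => simpa [A] using hx
    | succ m ih => simpa [A, add_assoc] using hCx m (A m) ih
  have hlim : ∀ b, ∃ a, ∀ m : ℕ, a - A m b ∈ h.filtration (d - degree b + m) := fun b =>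
    exists_sub_mem_filtration_of_cauchy (fun m => A m b) (by simp [A])
      fun m => by simpa [A, sub_add_eq_add_sub] using hC m (A m) (hA m) b
  choose a ha using hlim
  refine ⟨a, eq_of_sub_eq_zero (eq_zero_of_forall_mem_filtration (h := h) (d := d) fun m => ?_)⟩
  have hsplit : x - ∑ b ∈ B, a b * f b =
      (x - ∑ b ∈ B, A m b * f b) - ∑ b ∈ B, (a b - A m b) * f b := by
    simp only [sub_mul, Finset.sum_sub_distrib]
    abel
  rw [hsplit]
  refine sub_mem (hA m) (Submodule.sum_mem _ fun b hb => ?_)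
  have := mul_mem_filtration (ha b m) (hfB b hb)
  rwa [sub_add_eq_add_sub, sub_add_cancel] at this

end

variable {I : TwoSidedIdeal L}

theorem one_mem_of_monomial_mem {s : Fin n → ℤ} (hs : h.monomial s ∈ I) : (1 : L) ∈ I := by
  have hunit := I.mul_mem_left (h.monomial (-s)) _ hs
  rw [monomial_mul_monomial, neg_add_cancel, monomial_zero] at hunit
  simpa [smul_smul, inv_mul_cancel₀ (Q.zweight_ne_zero _ _)] using
    I.algebra_smul_mem (Q.zweight (-s) s)⁻¹ hunit

theorem IsHStable.hAct_mem (hI : h.IsHStable I) (θ : Fin n → kˣ) {f : L} (hf : f ∈ I) :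
    h.hAct θ f ∈ I := by
  rw [← SetLike.mem_coe, ← hI θ]
  exact Set.mem_image_of_mem _ hf

variable (h I) in
/-- Exponents of the monomials in the lowest-degree part of elements of `I` that are power
series (have only nonnegative exponents). -/
def initialExponents : Set (Fin n → ℤ) :=
  {t | ∃ f ∈ I, f ∈ h.filtration (degree t) ∧ h.coeff f t ≠ 0}

theorem nonneg_of_mem_initialExponents {t : Fin n → ℤ} (ht : t ∈ h.initialExponents I) :
    0 ≤ t := by
  obtain ⟨f, -, hf, hft⟩ := ht
  exact (hf t hft).1

theorem isPWO_initialExponents : (h.initialExponents I).IsPWO :=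
  isPWO_setOf_nonneg.mono fun _ ht => nonneg_of_mem_initialExponents ht

theorem initialExponents_nonempty (hI : I ≠ ⊥) : (h.initialExponents I).Nonempty := by
  obtain ⟨f, hfI, hf0⟩ : ∃ f ∈ I, f ≠ 0 := by
    by_contra! H
    exact hI (eq_bot_iff.2 fun f hf => (TwoSidedIdeal.mem_bot L).2 (H f hf))
  obtain ⟨N, hN⟩ := h.coeff_bounded f
  let c : Fin n → ℤ := fun _ => N
  let g := h.monomial c * f
  have hg0 : ∀ s, h.coeff g s ≠ 0 → 0 ≤ s := fun s hs i => by
    by_contra hsi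
    have hsi' : (s - c) i < -(N : ℤ) := by
      simp only [Pi.sub_apply, Pi.zero_apply, not_le, c] at hsi ⊢
      omega
    exact hs (by rw [coeff_monomial_mul, hN _ ⟨i, hsi'⟩, mul_zero])
  obtain ⟨s₁, hs₁⟩ := h.exists_coeff_ne_zero hf0
  have hsupp : {s | h.coeff g s ≠ 0}.Nonempty :=
    ⟨s₁ + c, by simpa [g, coeff_monomial_mul] using ⟨Q.zweight_ne_zero _ _, hs₁⟩⟩
  let deg : (Fin n → ℤ) → ℕ := fun s => (degree s).toNat
  let t := Function.argminOn deg _ hsupp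
  have ht : h.coeff g t ≠ 0 := Function.argminOn_mem deg _ hsupp
  refine ⟨t, g, I.mul_mem_left _ _ hfI, fun s hs => ⟨hg0 s hs, ?_⟩, ht⟩
  have hle : deg t ≤ deg s :=
    Function.argminOn_le deg _ (show s ∈ {s | h.coeff g s ≠ 0} from hs)
  have hs0 := degree_nonneg (hg0 s hs)
  have ht0 := degree_nonneg (hg0 t ht)
  simp only [deg] at hle
  omega

variable [Infinite k]

theorem IsHStable.exists_isolate (hI : h.IsHStable I) {f : L} (hf : f ∈ I)
    (t : Fin n → ℤ) (F : Finset (Fin n → ℤ)) :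
    ∃ g ∈ I, ∃ e : (Fin n → ℤ) → k,
      (∀ s, h.coeff g s = e s * h.coeff f s) ∧ e t = 1 ∧
        ∀ s ∈ F, s ≠ t → e s = 0 := by
  classical
  induction F using Finset.induction_on with
  | empty => exact ⟨f, hf, fun _ => 1, fun s => (one_mul _).symm, rfl, by simp⟩
  | @insert a F _ ih =>
    obtain ⟨g, hg, e, hge, het, heF⟩ := ih
    by_cases hat : a = t
    · refine ⟨g, hg, e, hge, het, fun s hs hst => ?_⟩
      obtain rfl | hs := Finset.mem_insert.1 hs
      exacts [absurd hat hst, heF s hs hst]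
    obtain ⟨θ, hθ⟩ := exists_character_ne (k := k) hat
    -- `θ` scales `x^s` by `χ s`; subtracting `χ a • g` kills the `x^a`-coefficient
    let χ : (Fin n → ℤ) → k := fun s => character θ s
    have hc : χ t - χ a ≠ 0 := sub_ne_zero.2 fun heq => hθ (Units.ext heq.symm)
    refine ⟨(χ t - χ a)⁻¹ • (h.hAct θ g - χ a • g),
      I.algebra_smul_mem _ (sub_mem (hI.hAct_mem θ hg) (I.algebra_smul_mem _ hg)),
      fun s => (χ t - χ a)⁻¹ * (χ s - χ a) * e s, fun s => ?_, ?_, fun s hs hst => ?_⟩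
    · simp only [map_smul, map_sub, Pi.smul_apply, Pi.sub_apply, coeff_hAct, hge, smul_eq_mul, χ]
      ring
    · beta_reduce
      rw [het, mul_one, inv_mul_cancel₀ hc]
    · beta_reduce
      obtain rfl | hs := Finset.mem_insert.1 hs
      · simp
      · rw [heF s hs hst, mul_zero]

theorem IsHStable.exists_sub_monomial_mem_filtration (hI : h.IsHStable I) {t : Fin n → ℤ}
    (ht : t ∈ h.initialExponents I) (M : ℤ) :
    ∃ g ∈ I, g - h.monomial t ∈ h.filtration M := by
  obtain ⟨f, hfI, hf, hft⟩ := ht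
  obtain ⟨g, hgI, e, hge, het, heF⟩ := hI.exists_isolate hfI t (Finset.Icc 0 fun _ => M)
  refine ⟨(h.coeff f t)⁻¹ • g, I.algebra_smul_mem _ hgI, fun s hs => ?_⟩
  rw [map_sub, map_smul, Pi.sub_apply, Pi.smul_apply, hge, coeff_monomial, smul_eq_mul] at hs
  by_cases hst : s = t
  · subst hst
    simp [het, inv_mul_cancel₀ hft] at hs
  rw [if_neg hst, sub_zero] at hs
  have hs0 : 0 ≤ s := (hf s (right_ne_zero_of_mul (right_ne_zero_of_mul hs))).1
  refine ⟨hs0, le_of_not_gt fun hsM => left_ne_zero_of_mul (right_ne_zero_of_mul hs) ?_⟩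
  exact heF s (Finset.mem_Icc.2 ⟨hs0, fun i => (le_degree_of_nonneg hs0 i).trans hsM.le⟩) hst

/-- Approximate `x^{s₀}` inside `I` to order `d + 1` and subtract. -/
theorem IsHStable.mem_initialExponents_of_monomial_sub_mem (hI : h.IsHStable I)
    {s₀ : Fin n → ℤ} (hs₀ : s₀ ∈ h.initialExponents I) {d : ℤ} {r : L}
    (hr : r ∈ h.filtration d) (hxr : h.monomial s₀ - r ∈ I) {s : Fin n → ℤ}
    (hs : h.coeff r s ≠ 0) (hsd : degree s = d) : s ∈ h.initialExponents I := by
  obtain ⟨g, hgI, hg⟩ := hI.exists_sub_monomial_mem_filtration hs₀ (d + 1)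
  have hsplit : g - (h.monomial s₀ - r) = r + (g - h.monomial s₀) := by abel
  refine ⟨g - (h.monomial s₀ - r), sub_mem hgI hxr, ?_, ?_⟩
  · rw [hsplit, hsd]
    exact add_mem hr (filtration_anti (by omega) hg)
  · rwa [hsplit, map_add, Pi.add_apply,
      coeff_eq_zero_of_mem_filtration hg (by omega), add_zero]

theorem IsHStable.eq_bot_or_eq_top (hI : h.IsHStable I) : I = ⊥ ∨ I = ⊤ := by
  classical
  refine or_iff_not_imp_left.2 fun hI0 => ?_
  obtain ⟨s₀, hs₀⟩ := initialExponents_nonempty (h := h) hI0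
  obtain ⟨B, hBT, hBdom⟩ :=
    (isPWO_initialExponents (h := h) (I := I)).exists_finset_forall_exists_le
  choose! f hfI hf using fun b (hb : b ∈ B) =>
    hI.exists_sub_monomial_mem_filtration (hBT hb) (degree b + 1)
  have hfB : ∀ b ∈ B, f b ∈ h.filtration (degree b) := fun b hb => by
    simpa using add_mem (filtration_anti (by omega) (hf b hb))
      (monomial_mem_filtration (nonneg_of_mem_initialExponents (hBT hb)))
  obtain ⟨a, ha⟩ := exists_eq_sum_mul_of_forall_approx hfB
    (monomial_mem_filtration (nonneg_of_mem_initialExponents hs₀)) fun m A hA => by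
      have hxr : h.monomial s₀ - (h.monomial s₀ - ∑ b ∈ B, A b * f b) ∈ I := by
        rw [sub_sub_cancel]
        exact sum_mem fun b hb => I.mul_mem_left _ _ (hfI b hb)
      obtain ⟨C, hC, hCr⟩ := exists_reduction hf hA fun s hs hrs => hBdom s
        (hI.mem_initialExponents_of_monomial_sub_mem hs₀ hA hxr hrs (mem_degreeSlice.1 hs).2)
      refine ⟨C, hC, ?_⟩
      simpa [add_mul, Finset.sum_add_distrib, sub_sub] using hCr
  refine (TwoSidedIdeal.one_mem_iff I).1 (one_mem_of_monomial_mem (h := h) (s := s₀) ?_)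
  rw [ha]
  exact sum_mem fun b hb => I.mul_mem_left _ _ (hfI b hb)

end IsQLaurentSeriesRing

open IsQLaurentSeriesRing in
theorem stmt_7_general {k : Type*} [Field k] [Infinite k] {n : ℕ} (Q : QMatrix k n)
    (L : Type*) [Ring L] [Algebra k L] (h : IsQLaurentSeriesRing Q L)
    (P : TwoSidedIdeal L) (hP : IsPrimeTwoSided P) :
    (⋂ θ : Fin n → kˣ, h.hAct θ '' (P : Set L)) = {0} := by
  let I : TwoSidedIdeal L := ⨅ θ, P.comap (h.hActHom θ)
  have hmem : ∀ f, f ∈ I ↔ ∀ θ, h.hAct θ f ∈ P := fun f => by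
    simp [I, TwoSidedIdeal.mem_iInf, TwoSidedIdeal.mem_comap, hActHom]
  have hI : (⋂ θ : Fin n → kˣ, h.hAct θ '' (P : Set L)) = I := by
    ext f
    simp only [Set.mem_iInter, mem_image_hAct_iff, SetLike.mem_coe, hmem]
    exact ⟨fun hf θ => by simpa using hf θ⁻¹, fun hf θ => hf θ⁻¹⟩
  have hstable : h.IsHStable I := fun θ => by
    ext f
    simp only [mem_image_hAct_iff, SetLike.mem_coe, hmem, hAct_hAct]
    exact ⟨fun hf θ' => by simpa [mul_assoc] using hf (θ' * θ), fun hf θ' => hf _⟩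
  have hItop : I ≠ ⊤ := fun htop => hP.1 <| eq_top_iff.2 fun f _ => by
    simpa [hAct_one] using (hmem f).1 (htop ▸ trivial) 1
  rw [hI, hstable.eq_bot_or_eq_top.resolve_right hItop, TwoSidedIdeal.coe_bot]

/-- Assume `k` is infinite. For every prime two-sided ideal `P` of `L`,
the intersection `⋂_{θ∈H} θ(P)` of the `H`-orbit of `P` equals the zero ideal. -/
theorem stmt_7 {k : Type*} [Field k] [Infinite k] {n : ℕ} (hn : 0 < n) (Q : QMatrix k n)
    (L : Type*) [Ring L] [Algebra k L] (h : IsQLaurentSeriesRing Q L)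
    (P : TwoSidedIdeal L) (hP : IsPrimeTwoSided P) :
    (⋂ θ : Fin n → kˣ, h.hAct θ '' (P : Set L)) = {0} :=
  stmt_7_general Q L h P hP

end
end
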